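/- Let Z be a random variable on a finite probability space with E Z = m, with a filtration F_0 (trivial) ⊆ F_1 ⊆ ... ⊆ F_t, Z being F_t-measurable. Let Z_i = E(Z|F_i), var_i = E((Z_i - E(Z_i|F_{i-1}))² | F_{i-1}), V = Σ_{i=1}^t var_i, dev_i = sup(|Z_i - Z_{i-1}| | F_{i-1}) (the conditional supremum), and dev = max_i dev_i. Then for any a ≥ 0 and values α, β ≥ 0: P({|Z - m| ≥ a} ∩ {V ≤ β} ∩ {dev ≤ α}) ≤ 2 exp(-a² / (2β + 2αa/3)). -/

import Mathlib

/-!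
Cut each increment `Δᵢ = Zᵢ - Zᵢ₋₁` of the Doob martingale off outside the predictable event
`{devᵢ ≤ α}`. The result `Yᵢ` is still a martingale difference, now bounded by `α`, and its
conditional variance is `varᵢ` on that event and `0` off it. For `|x| ≤ α` and `l α < 3`,
comparing the exponential series with a geometric one gives `exp (l x) ≤ 1 + l x + c x²` with
`c = l² / (2 (1 - l α / 3))`, so `exp (∑ (l Yᵢ - c Var[Yᵢ | ℱᵢ₋₁]))` is a supermartingale and has
mean at most `1`. On the event in question nothing is cut off, so Markov's inequality bounds its
probability by `exp (-l a + c β)`; optimising `l` gives the Bernstein exponent, and the two tails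
give the factor `2`.
-/

open MeasureTheory Real

/-- The atom of `ω` in the σ-field `G`. -/
def atomOf {Ω : Type*} (G : MeasurableSpace Ω) (ω : Ω) : Set Ω :=
  {ω' | ∀ A : Set Ω, MeasurableSet[G] A → ω ∈ A → ω' ∈ A}

/-- The conditional supremum of `Y` given `G`: the maximum of `Y` over the `G`-atom
containing `ω`. -/
noncomputable def condSup {Ω : Type*} (G : MeasurableSpace Ω) (Y : Ω → ℝ) (ω : Ω) : ℝ :=
  sSup (Y '' atomOf G ω)

open Finset ProbabilityTheory

section Atoms

variable {Ω : Type*} {G : MeasurableSpace Ω} {Y : Ω → ℝ} {ω ω' : Ω}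

lemma mem_atomOf_self : ω ∈ atomOf G ω := fun _ _ h => h

lemma mem_atomOf_comm (h : ω' ∈ atomOf G ω) : ω ∈ atomOf G ω' := by
  intro A hA hω'
  by_contra hω
  exact h Aᶜ hA.compl hω hω'

lemma atomOf_eq_of_mem (h : ω' ∈ atomOf G ω) : atomOf G ω' = atomOf G ω :=
  Set.ext fun _ => ⟨fun hx A hA hω => hx A hA (h A hA hω),
    fun hx A hA hω' => hx A hA (mem_atomOf_comm h A hA hω')⟩

lemma condSup_eq_of_mem (h : ω' ∈ atomOf G ω) : condSup G Y ω' = condSup G Y ω := by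
  rw [condSup, atomOf_eq_of_mem h, condSup]

/-- Each point outside the atom is separated from it by one measurable set, so the atom is a
countable intersection of measurable sets. -/
lemma measurableSet_atomOf [Countable Ω] : MeasurableSet[G] (atomOf G ω) := by
  have hsep : ∀ ω' : ↥(atomOf G ω)ᶜ, ∃ A, MeasurableSet[G] A ∧ ω ∈ A ∧ (ω' : Ω) ∉ A := by
    rintro ⟨ω', hω'⟩
    simpa [atomOf] using hω'
  choose A hA hωA hω'A using hsep
  convert MeasurableSet.iInter hA using 1
  ext x
  simp only [Set.mem_iInter]
  refine ⟨fun hx ω' => hx _ (hA ω') (hωA ω'), fun hx => ?_⟩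
  by_contra hxω
  exact hω'A ⟨x, hxω⟩ (hx ⟨x, hxω⟩)

lemma measurable_condSup [Countable Ω] : Measurable[G] (condSup G Y) := by
  intro s _
  have h : condSup G Y ⁻¹' s = ⋃ ω ∈ {ω : Ω | condSup G Y ω ∈ s}, atomOf G ω := by
    ext x
    simp only [Set.mem_preimage, Set.mem_iUnion]
    refine ⟨fun hx => ⟨x, hx, mem_atomOf_self⟩, ?_⟩
    rintro ⟨ω, hω, hx⟩
    rwa [condSup_eq_of_mem hx]
  rw [h]
  exact MeasurableSet.biUnion (Set.to_countable _) fun _ _ => measurableSet_atomOf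

lemma le_condSup [Finite Ω] : Y ω ≤ condSup G Y ω :=
  le_csSup (Set.toFinite _).bddAbove ⟨ω, mem_atomOf_self, rfl⟩

end Atoms

section ExpBound

open Nat in
lemma two_mul_three_pow_le_factorial (n : ℕ) : 2 * 3 ^ n ≤ (n + 2)! := by
  induction n with
  | zero => simp [Nat.factorial]
  | succ k ih =>
    calc 2 * 3 ^ (k + 1) = 3 * (2 * 3 ^ k) := by ring
    _ ≤ (k + 3) * (k + 2)! := Nat.mul_le_mul (by omega) ih
    _ = (k + 3)! := rfl

open Nat in
lemma exp_le_one_add_add_sq_div {u : ℝ} (hu : |u| < 3) :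
    exp u ≤ 1 + u + u ^ 2 / (2 * (1 - |u| / 3)) := by
  set q := |u| / 3
  have hq0 : 0 ≤ q := by positivity
  have hq1 : q < 1 := by simp only [q]; linarith
  have hsum : Summable (fun n : ℕ => u ^ n / n !) := Real.summable_pow_div_factorial u
  have hsplit : exp u = 1 + u + ∑' n : ℕ, u ^ (n + 2) / (n + 2)! := by
    rw [Real.exp_eq_exp_ℝ, NormedSpace.exp_eq_tsum_div]
    dsimp only
    rw [← hsum.sum_add_tsum_nat_add 2]
    norm_num [Finset.sum_range_succ]
  have hterm : ∀ n : ℕ, u ^ (n + 2) / (n + 2)! ≤ u ^ 2 / 2 * q ^ n := fun n =>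
    calc u ^ (n + 2) / (n + 2)!
        ≤ |u| ^ (n + 2) / (n + 2)! := by
          gcongr ?_ / _
          exact (le_abs_self _).trans_eq (abs_pow u _)
      _ ≤ |u| ^ (n + 2) / (2 * 3 ^ n) := by
          gcongr
          exact_mod_cast two_mul_three_pow_le_factorial n
      _ = u ^ 2 / 2 * q ^ n := by
          rw [pow_add, sq_abs, div_pow]
          field_simp
  have htail : ∑' n : ℕ, u ^ (n + 2) / (n + 2)! ≤ u ^ 2 / 2 * (1 - q)⁻¹ := by
    rw [← tsum_geometric_of_lt_one hq0 hq1, ← tsum_mul_left]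
    exact Summable.tsum_le_tsum hterm ((summable_nat_add_iff 2).mpr hsum)
      ((summable_geometric_of_lt_one hq0 hq1).mul_left _)
  rw [hsplit]
  calc 1 + u + ∑' n : ℕ, u ^ (n + 2) / (n + 2)! ≤ 1 + u + u ^ 2 / 2 * (1 - q)⁻¹ := by gcongr
    _ = 1 + u + u ^ 2 / (2 * (1 - q)) := by field_simp

lemma exp_mul_le_one_add_add_sq_mul {l α x : ℝ} (hl : 0 ≤ l) (hlα : l * α < 3) (hx : |x| ≤ α) :
    exp (l * x) ≤ 1 + l * x + l ^ 2 / (2 * (1 - l * α / 3)) * x ^ 2 := by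
  have hlx : |l * x| ≤ l * α := by
    rw [abs_mul, abs_of_nonneg hl]
    exact mul_le_mul_of_nonneg_left hx hl
  calc exp (l * x) ≤ 1 + l * x + (l * x) ^ 2 / (2 * (1 - |l * x| / 3)) :=
        exp_le_one_add_add_sq_div (hlx.trans_lt hlα)
    _ ≤ 1 + l * x + (l * x) ^ 2 / (2 * (1 - l * α / 3)) := by
        gcongr
        linarith
    _ = 1 + l * x + l ^ 2 / (2 * (1 - l * α / 3)) * x ^ 2 := by ring

/-- The exponent of Bernstein's inequality is attained at `l = a / (β + α a / 3)`, or at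
`l = 3 / (2 α)` when `β = 0`. -/
lemma exists_bernstein_exponent {a α β : ℝ} (ha : 0 ≤ a) (hα : 0 ≤ α) (hβ : 0 ≤ β)
    (hd : 2 * β + 2 * α * a / 3 ≠ 0) :
    ∃ l, 0 ≤ l ∧ l * α < 3 ∧
      -(l * a) + l ^ 2 / (2 * (1 - l * α / 3)) * β = -a ^ 2 / (2 * β + 2 * α * a / 3) := by
  rcases hβ.eq_or_lt with rfl | hβ
  · have hαpos : 0 < α := hα.lt_of_ne (by rintro rfl; simp at hd)
    have hapos : 0 < a := ha.lt_of_ne (by rintro rfl; simp at hd)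
    refine ⟨3 / (2 * α), by positivity, by field_simp; norm_num, ?_⟩
    field_simp
    ring
  · set b := β + α * a / 3
    have hb : 0 < b := by positivity
    have h3b : 3 * b = 3 * β + α * a := by simp only [b]; ring
    refine ⟨a / b, by positivity, ?_, ?_⟩
    · rw [div_mul_eq_mul_div, div_lt_iff₀ hb]
      linarith
    · have h1 : 1 - a / b * α / 3 = β / b := by
        field_simp
        ring
      rw [h1, show 2 * β + 2 * α * a / 3 = 2 * b by ring]
      field_simp
      ring

end ExpBound

lemma sum_Icc_sub_pred {M : Type*} [AddCommGroup M] (f : ℕ → M) (n : ℕ) :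
    ∑ i ∈ Icc 1 n, (f i - f (i - 1)) = f n - f 0 := by
  rw [← Finset.Ico_add_one_right_eq_Icc, Finset.sum_Ico_eq_sum_range, ← Finset.sum_range_sub]
  simp [add_comm]

section CondExp

variable {Ω : Type*} {m m0 : MeasurableSpace Ω} {μ : Measure Ω}

lemma measure_le_exp_neg_of_integral_exp_le_one [IsFiniteMeasure μ] {S : Set Ω} {G : Ω → ℝ}
    (hG : Integrable (fun ω => exp (G ω)) μ) (hG1 : ∫ ω, exp (G ω) ∂μ ≤ 1) {r : ℝ}
    (hS : ∀ᵐ ω ∂μ, ω ∈ S → r ≤ G ω) : μ S ≤ ENNReal.ofReal (exp (-r)) :=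
  calc μ S ≤ μ {ω | exp r ≤ exp (G ω)} :=
        measure_mono_ae (hS.mono fun ω h hω => exp_le_exp.mpr (h hω))
    _ = ENNReal.ofReal (μ.real {ω | exp r ≤ exp (G ω)}) :=
        (ofReal_measureReal (measure_ne_top _ _)).symm
    _ ≤ ENNReal.ofReal (exp (-r)) := by
        refine ENNReal.ofReal_le_ofReal ?_
        rw [exp_neg, ← one_div, le_div_iff₀' (exp_pos r)]
        exact (mul_meas_ge_le_integral_of_nonneg (.of_forall fun ω => (exp_pos _).le) hG _).trans
          hG1

lemma condVar_ae_eq_condExp_sq_sub {X W : Ω → ℝ} (h : μ[X|m] =ᵐ[μ] W) :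
    Var[X; μ | m] =ᵐ[μ] μ[(X - W) ^ 2|m] :=
  condExp_congr_ae (by filter_upwards [h] with ω hω; simp [hω])

lemma condExp_exp_mul_le_exp_condVar [IsFiniteMeasure μ] (hm : m ≤ m0) {Y : Ω → ℝ}
    {l c α : ℝ} (hY : StronglyMeasurable Y) (hY0 : μ[Y|m] =ᵐ[μ] 0) (hYα : ∀ ω, |Y ω| ≤ α)
    (hexp : ∀ x, |x| ≤ α → exp (l * x) ≤ 1 + l * x + c * x ^ 2) :
    μ[fun ω => exp (l * Y ω)|m] ≤ᵐ[μ] fun ω => exp (c * Var[Y; μ | m] ω) := by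
  have hYint : Integrable Y μ := .of_bound hY.aestronglyMeasurable α (.of_forall hYα)
  have hY2int : Integrable (Y ^ 2) μ :=
    .of_bound (hY.pow 2).aestronglyMeasurable (α ^ 2) (.of_forall fun ω => by
      simpa [sq_abs] using pow_le_pow_left₀ (abs_nonneg _) (hYα ω) 2)
  have hexpint : Integrable (fun ω => exp (l * Y ω)) μ :=
    .of_bound (continuous_exp.comp_stronglyMeasurable (hY.const_mul l)).aestronglyMeasurable
      (exp (|l| * α)) (.of_forall fun ω => by
        rw [norm_of_nonneg (exp_pos _).le, exp_le_exp]
        calc l * Y ω ≤ |l| * |Y ω| := (le_abs_self _).trans_eq (abs_mul _ _)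
          _ ≤ |l| * α := mul_le_mul_of_nonneg_left (hYα ω) (abs_nonneg l))
  set P : Ω → ℝ := (fun _ => 1) + l • Y + c • Y ^ 2
  have hmono : μ[fun ω => exp (l * Y ω)|m] ≤ᵐ[μ] μ[P|m] :=
    condExp_mono hexpint (((integrable_const 1).add (hYint.smul l)).add (hY2int.smul c))
      (.of_forall fun ω => by simpa [P] using hexp _ (hYα ω))
  have hP : μ[P|m] =ᵐ[μ] (fun _ => 1) + l • μ[Y|m] + c • μ[Y ^ 2|m] := by
    filter_upwards [condExp_add ((integrable_const 1).add (hYint.smul l)) (hY2int.smul c) m,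
      condExp_add (integrable_const 1) (hYint.smul l) m, condExp_smul l Y m,
      condExp_smul c (Y ^ 2) m] with ω h1 h2 h3 h4
    simp only [P, Pi.add_apply, h1, h2, h3, h4, condExp_const hm]
  have hVar : Var[Y; μ | m] =ᵐ[μ] μ[Y ^ 2|m] := by
    simpa using condVar_ae_eq_condExp_sq_sub hY0
  filter_upwards [hmono, hP, hY0, hVar] with ω h1 h2 h3 h4
  calc _ ≤ 1 + l * (μ[Y|m]) ω + c * (μ[Y ^ 2|m]) ω := by simpa [h2] using h1
    _ ≤ exp (c * Var[Y; μ | m] ω) := by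
        rw [h3, h4, Pi.zero_apply]
        linarith [add_one_le_exp (c * (μ[Y ^ 2|m]) ω)]

lemma condExp_indicator_smul_ae_eq_zero {A : Set Ω} (hA : MeasurableSet[m] A) {X : Ω → ℝ}
    (hX : Integrable X μ) (hX0 : μ[X|m] =ᵐ[μ] 0) (s : ℝ) :
    μ[A.indicator (s • X)|m] =ᵐ[μ] 0 := by
  filter_upwards [condExp_indicator (hX.smul s) hA, condExp_smul s X m, hX0] with ω h1 h2 h3
  by_cases hω : ω ∈ A <;> simp [h1, h2, h3, hω]

lemma condVar_indicator_smul_ae_eq {A : Set Ω} (hA : MeasurableSet[m] A) {X : Ω → ℝ}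
    (hX : Integrable X μ) (hX2 : Integrable (X ^ 2) μ) (hX0 : μ[X|m] =ᵐ[μ] 0) {s : ℝ}
    (hs : s ^ 2 = 1) :
    Var[A.indicator (s • X); μ | m] =ᵐ[μ] A.indicator (μ[X ^ 2|m]) := by
  have hsq : (A.indicator (s • X) - 0) ^ 2 = A.indicator (X ^ 2) := by
    funext ω
    by_cases hω : ω ∈ A <;> simp [hω, mul_pow, hs]
  filter_upwards [condVar_ae_eq_condExp_sq_sub (condExp_indicator_smul_ae_eq_zero hA hX hX0 s),
    condExp_indicator hX2 hA] with ω h1 h2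
  rw [h1, hsq, h2]

lemma condExp_sub_condExp_pred_ae_eq_zero [IsFiniteMeasure μ] (ℱ : Filtration ℕ m0) (Z : Ω → ℝ)
    (i : ℕ) : μ[μ[Z|ℱ i] - μ[Z|ℱ (i - 1)]|ℱ (i - 1)] =ᵐ[μ] 0 := by
  filter_upwards [condExp_sub (μ := μ) (f := μ[Z|ℱ i]) integrable_condExp integrable_condExp
    (ℱ (i - 1)), (martingale_condExp Z ℱ μ).condExp_ae_eq (Nat.sub_le i 1)] with ω h1 h2
  rw [h1, Pi.sub_apply, h2, condExp_of_stronglyMeasurable (ℱ.le _) stronglyMeasurable_condExp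
    integrable_condExp, Pi.zero_apply, sub_self]

end CondExp

section FiniteSpace

variable {Ω : Type*} [Finite Ω] {m m0 : MeasurableSpace Ω} {μ : Measure Ω}

lemma integrable_of_finite [IsFiniteMeasure μ] {E : Type*} [NormedAddCommGroup E] {f : Ω → E}
    (hf : AEStronglyMeasurable f μ) : Integrable f μ := by
  obtain ⟨C, hC⟩ := (Set.finite_range fun ω => ‖f ω‖).bddAbove
  exact .of_bound hf C (.of_forall fun ω => hC ⟨ω, rfl⟩)

lemma integral_mul_le_integral_mul_of_condExp_le [IsFiniteMeasure μ] (hm : m ≤ m0)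
    {Q f g : Ω → ℝ} (hQ : StronglyMeasurable[m] Q) (hQ0 : 0 ≤ Q) (hf : StronglyMeasurable f)
    (hg : StronglyMeasurable g) (hfg : μ[f|m] ≤ᵐ[μ] g) :
    ∫ ω, Q ω * f ω ∂μ ≤ ∫ ω, Q ω * g ω ∂μ := by
  have hQ' : StronglyMeasurable Q := hQ.mono hm
  have hQf : μ[Q * f|m] =ᵐ[μ] Q * μ[f|m] :=
    condExp_mul_of_stronglyMeasurable_left hQ
      (integrable_of_finite (hQ'.mul hf).aestronglyMeasurable)
      (integrable_of_finite hf.aestronglyMeasurable)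
  calc ∫ ω, Q ω * f ω ∂μ = ∫ ω, (μ[Q * f|m]) ω ∂μ := (integral_condExp hm).symm
    _ = ∫ ω, Q ω * (μ[f|m]) ω ∂μ := integral_congr_ae hQf
    _ ≤ ∫ ω, Q ω * g ω ∂μ := by
        refine integral_mono_ae (integrable_of_finite ?_) (integrable_of_finite ?_) ?_
        · exact (hQ'.mul (stronglyMeasurable_condExp.mono hm)).aestronglyMeasurable
        · exact (hQ'.mul hg).aestronglyMeasurable
        · filter_upwards [hfg] with ω hω
          exact mul_le_mul_of_nonneg_left hω (hQ0 ω)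

theorem integral_exp_sum_sub_condVar_le_one [IsProbabilityMeasure μ] (ℱ : Filtration ℕ m0)
    {Y : ℕ → Ω → ℝ} {l c α : ℝ} (hY : ∀ i, StronglyMeasurable[ℱ i] (Y i))
    (hY0 : ∀ i, μ[Y i|ℱ (i - 1)] =ᵐ[μ] 0) (hYα : ∀ i ω, |Y i ω| ≤ α)
    (hexp : ∀ x, |x| ≤ α → exp (l * x) ≤ 1 + l * x + c * x ^ 2) (n : ℕ) :
    ∫ ω, exp (∑ i ∈ Icc 1 n, (l * Y i ω - c * Var[Y i; μ | ℱ (i - 1)] ω)) ∂μ ≤ 1 := by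
  induction n with
  | zero => simp
  | succ n ih =>
    set S : Ω → ℝ := fun ω => ∑ i ∈ Icc 1 n, (l * Y i ω - c * Var[Y i; μ | ℱ (i - 1)] ω)
    have hS : StronglyMeasurable[ℱ n] S := by
      refine (Finset.measurable_sum _ fun i hi => ?_).stronglyMeasurable
      have hin : i ≤ n := (Finset.mem_Icc.mp hi).2
      exact (((hY i).mono (ℱ.mono hin)).measurable.const_mul l).sub
        ((stronglyMeasurable_condVar.mono (ℱ.mono (by omega))).measurable.const_mul c)
    set W := Var[Y (n + 1); μ | ℱ n]
    have hW : StronglyMeasurable[ℱ n] W := stronglyMeasurable_condVar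
    have hstep : ∀ ω, exp (∑ i ∈ Icc 1 (n + 1), (l * Y i ω - c * Var[Y i; μ | ℱ (i - 1)] ω))
        = exp (S ω - c * W ω) * exp (l * Y (n + 1) ω) := by
      intro ω
      simp only [S, W]
      rw [Finset.sum_Icc_succ_top (by omega), ← exp_add, Nat.add_sub_cancel]
      ring_nf
    have hYn : StronglyMeasurable (Y (n + 1)) := (hY (n + 1)).mono (ℱ.le _)
    calc _ = ∫ ω, exp (S ω - c * W ω) * exp (l * Y (n + 1) ω) ∂μ := by simp only [hstep]
      _ ≤ ∫ ω, exp (S ω - c * W ω) * exp (c * W ω) ∂μ := by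
          refine integral_mul_le_integral_mul_of_condExp_le (ℱ.le n)
            (continuous_exp.comp_stronglyMeasurable (hS.sub (hW.const_mul c)))
            (fun ω => (exp_pos _).le)
            (continuous_exp.comp_stronglyMeasurable (hYn.const_mul l))
            (continuous_exp.comp_stronglyMeasurable ((hW.mono (ℱ.le n)).const_mul c)) ?_
          simpa using condExp_exp_mul_le_exp_condVar (ℱ.le n) hYn (hY0 (n + 1)) (hYα (n + 1)) hexp
      _ = ∫ ω, exp (S ω) ∂μ := by simp only [← exp_add, sub_add_cancel]
      _ ≤ 1 := ih

theorem measure_le_exp_of_condVar_le_of_condSup_le [IsProbabilityMeasure μ]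
    (ℱ : Filtration ℕ m0) (Z : Ω → ℝ) (t : ℕ) {s l c a α β : ℝ} (hs : |s| = 1) (hl : 0 ≤ l)
    (hc : 0 ≤ c) (hα : 0 ≤ α) (hexp : ∀ x, |x| ≤ α → exp (l * x) ≤ 1 + l * x + c * x ^ 2) :
    μ {ω | a ≤ s * ((μ[Z|ℱ t]) ω - (μ[Z|ℱ 0]) ω) ∧
        ∑ i ∈ Icc 1 t, Var[μ[Z|ℱ i]; μ | ℱ (i - 1)] ω ≤ β ∧
        ∀ i ∈ Icc 1 t, condSup (ℱ (i - 1)) (fun ω' => |(μ[Z|ℱ i]) ω' - (μ[Z|ℱ (i - 1)]) ω'|) ω ≤ α}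
      ≤ ENNReal.ofReal (exp (-(l * a) + c * β)) := by
  set Δ : ℕ → Ω → ℝ := fun i => μ[Z|ℱ i] - μ[Z|ℱ (i - 1)]
  set A : ℕ → Set Ω := fun i => {ω | condSup (ℱ (i - 1)) (fun ω' => |Δ i ω'|) ω ≤ α}
  set Y : ℕ → Ω → ℝ := fun i => (A i).indicator (s • Δ i)
  have hA : ∀ i, MeasurableSet[ℱ (i - 1)] (A i) := fun i =>
    measurableSet_le measurable_condSup measurable_const
  have hΔ : ∀ i, StronglyMeasurable[ℱ i] (Δ i) := fun i =>
    stronglyMeasurable_condExp.sub (stronglyMeasurable_condExp.mono (ℱ.mono (Nat.sub_le i 1)))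
  have hΔint : ∀ i, Integrable (Δ i) μ := fun i => integrable_condExp.sub integrable_condExp
  have hΔ0 : ∀ i, μ[Δ i|ℱ (i - 1)] =ᵐ[μ] 0 := condExp_sub_condExp_pred_ae_eq_zero ℱ Z
  have hY : ∀ i, StronglyMeasurable[ℱ i] (Y i) := fun i =>
    ((hΔ i).const_smul s).indicator (ℱ.mono (Nat.sub_le i 1) _ (hA i))
  have hY0 : ∀ i, μ[Y i|ℱ (i - 1)] =ᵐ[μ] 0 := fun i =>
    condExp_indicator_smul_ae_eq_zero (hA i) (hΔint i) (hΔ0 i) s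
  have hYα : ∀ i ω, |Y i ω| ≤ α := fun i ω => by
    by_cases hω : ω ∈ A i
    · simpa [Y, hω, abs_mul, hs] using le_condSup.trans hω
    · simpa [Y, hω] using hα
  have hVar : ∀ i, Var[Y i; μ | ℱ (i - 1)] =ᵐ[μ] (A i).indicator (Var[μ[Z|ℱ i]; μ | ℱ (i - 1)]) :=
    fun i => by
      filter_upwards [condVar_indicator_smul_ae_eq (hA i) (hΔint i)
        (integrable_of_finite ((hΔint i).1.pow 2)) (hΔ0 i) (by rw [← sq_abs, hs, one_pow]),
        condVar_ae_eq_condExp_sq_sub ((martingale_condExp Z ℱ μ).condExp_ae_eq (Nat.sub_le i 1))]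
        with ω h1 h2
      change Var[(A i).indicator (s • Δ i); μ | ℱ (i - 1)] ω = _
      rw [h1, Set.indicator_apply, Set.indicator_apply, h2]
  have hsum : Measurable fun ω => ∑ i ∈ Icc 1 t, (l * Y i ω - c * Var[Y i; μ | ℱ (i - 1)] ω) :=
    Finset.measurable_sum _ fun i _ => (((hY i).mono (ℱ.le i)).measurable.const_mul l).sub
      ((stronglyMeasurable_condVar.mono (ℱ.le _)).measurable.const_mul c)
  rw [show -(l * a) + c * β = -(l * a - c * β) by ring]
  refine measure_le_exp_neg_of_integral_exp_le_one
    (integrable_of_finite (continuous_exp.measurable.comp hsum).aestronglyMeasurable)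
    (integral_exp_sum_sub_condVar_le_one ℱ hY hY0 hYα hexp t) ?_
  filter_upwards [ae_all_iff.2 hVar] with ω hVω
  rintro ⟨hdev, hV, hsup⟩
  have hterm : ∀ i ∈ Icc 1 t, l * Y i ω - c * Var[Y i; μ | ℱ (i - 1)] ω
      = l * s * Δ i ω - c * Var[μ[Z|ℱ i]; μ | ℱ (i - 1)] ω := fun i hi => by
    have hω : ω ∈ A i := hsup i hi
    simp [Y, hVω i, hω, mul_assoc]
  have hΔsum : ∑ i ∈ Icc 1 t, Δ i ω = (μ[Z|ℱ t]) ω - (μ[Z|ℱ 0]) ω :=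
    sum_Icc_sub_pred (fun i => (μ[Z|ℱ i]) ω) t
  simp only [Finset.sum_congr rfl hterm, Finset.sum_sub_distrib, ← Finset.mul_sum, hΔsum]
  nlinarith [mul_le_mul_of_nonneg_left hdev hl, mul_le_mul_of_nonneg_left hV hc]

theorem measure_abs_ge_le_two_mul_exp [IsProbabilityMeasure μ] (ℱ : Filtration ℕ m0)
    (Z : Ω → ℝ) (t : ℕ) {l c a α β : ℝ} (hl : 0 ≤ l) (hc : 0 ≤ c) (hα : 0 ≤ α)
    (hexp : ∀ x, |x| ≤ α → exp (l * x) ≤ 1 + l * x + c * x ^ 2) :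
    μ {ω | a ≤ |(μ[Z|ℱ t]) ω - (μ[Z|ℱ 0]) ω| ∧
        ∑ i ∈ Icc 1 t, Var[μ[Z|ℱ i]; μ | ℱ (i - 1)] ω ≤ β ∧
        ∀ i ∈ Icc 1 t, condSup (ℱ (i - 1)) (fun ω' => |(μ[Z|ℱ i]) ω' - (μ[Z|ℱ (i - 1)]) ω'|) ω ≤ α}
      ≤ ENNReal.ofReal (2 * exp (-(l * a) + c * β)) := by
  have hside (s : ℝ) (hs : |s| = 1) :=
    measure_le_exp_of_condVar_le_of_condSup_le (μ := μ) ℱ Z t (a := a) (β := β) hs hl hc hα hexp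
  calc _ ≤ μ ({ω | a ≤ 1 * ((μ[Z|ℱ t]) ω - (μ[Z|ℱ 0]) ω) ∧ _} ∪
          {ω | a ≤ -1 * ((μ[Z|ℱ t]) ω - (μ[Z|ℱ 0]) ω) ∧ _}) := by
        refine measure_mono fun ω ⟨hdev, hrest⟩ => ?_
        rcases le_abs'.mp hdev with h | h
        · exact Or.inr ⟨by linarith, hrest⟩
        · exact Or.inl ⟨by linarith, hrest⟩
    _ ≤ _ := measure_union_le _ _
    _ ≤ _ := add_le_add (hside 1 abs_one) (hside (-1) (by simp))
    _ = _ := by rw [← ENNReal.ofReal_add (exp_pos _).le (exp_pos _).le, two_mul]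

end FiniteSpace

/-- Bernstein-type martingale inequality with conditional variances and deviations
(McDiarmid, Thm 3.15, two-sided version). -/
theorem stmt5 {Ω : Type*} [Fintype Ω] [m0 : MeasurableSpace Ω]
    (μ : Measure Ω) [IsProbabilityMeasure μ] (t : ℕ) (ht : 0 < t)
    (𝒢 : ℕ → MeasurableSpace Ω) (hmono : Monotone 𝒢) (hle : ∀ i, 𝒢 i ≤ m0)
    (h0 : 𝒢 0 = ⊥) (Z : Ω → ℝ) (hZ : Measurable[𝒢 t] Z)
    (m : ℝ) (hm : m = ∫ ω, Z ω ∂μ) (a α β : ℝ) (ha : 0 ≤ a) (hα : 0 ≤ α) (hβ : 0 ≤ β) :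
    μ {ω | a ≤ |Z ω - m| ∧
        (∑ i ∈ Finset.Icc 1 t,
          (μ[fun ω' => ((μ[Z|𝒢 i]) ω' - (μ[(μ[Z|𝒢 i])|𝒢 (i - 1)]) ω') ^ 2|𝒢 (i - 1)]) ω)
          ≤ β ∧
        ((Finset.Icc 1 t).sup' (Finset.nonempty_Icc.mpr ht)
          (fun i => condSup (𝒢 (i - 1))
            (fun ω' => |(μ[Z|𝒢 i]) ω' - (μ[Z|𝒢 (i - 1)]) ω'|) ω)) ≤ α}
      ≤ ENNReal.ofReal (2 * Real.exp (-a ^ 2 / (2 * β + 2 * α * a / 3))) := by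
  by_cases hd : 2 * β + 2 * α * a / 3 = 0
  · -- `x / 0 = 0`, so the bound reads `2`.
    rw [hd, div_zero, exp_zero, mul_one]
    exact prob_le_one.trans (by norm_num)
  obtain ⟨l, hl, hlα, hexponent⟩ := exists_bernstein_exponent ha hα hβ hd
  let ℱ : Filtration ℕ m0 := ⟨𝒢, hmono, hle⟩
  have hZt : μ[Z|𝒢 t] = Z := condExp_of_stronglyMeasurable (hle t) hZ.stronglyMeasurable
    (integrable_of_finite (hZ.mono (hle t) le_rfl).aestronglyMeasurable)
  have hZ0 : μ[Z|𝒢 0] = fun _ => m := by rw [h0, condExp_bot, hm]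
  rw [← hexponent]
  -- The variance term of the statement unfolds to `Var[μ[Z|𝒢 i]; μ | 𝒢 (i - 1)]`.
  refine le_trans (measure_mono ?_) (measure_abs_ge_le_two_mul_exp ℱ Z t hl
    (div_nonneg (sq_nonneg l) (by linarith)) hα fun x hx => exp_mul_le_one_add_add_sq_mul hl hlα hx)
  rintro ω ⟨hdev, hV, hdevs⟩
  refine ⟨?_, hV, (Finset.sup'_le_iff _ _).mp hdevs⟩
  change a ≤ |(μ[Z|𝒢 t]) ω - (μ[Z|𝒢 0]) ω|
  rwa [hZt, hZ0]
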